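/- arXiv:2301.03454 — 2 statements merged into one kernel-verified Lean document; each statement's English description precedes it below -/
import Mathlib

section
/- Zero distribution error for α-inside Godunov, congested incoming case: fix i with u_i⁻ ≥ u*, and for each j let ũ_j ≥ u* satisfy f(ũ_j) = α_{j,i} f(u*). If u_j⁺ ≤ ũ_j for all j, then H_{i,j} = min{α_{j,i} f_in(u_i⁻), f_out(u_j⁺)} = α_{j,i} f(u*) for all j; consequently α_{l,i} H_{i,j} = α_{j,i} H_{i,l} for all j, l. -/
theorem zero_error_inside_congested
    (f : ℝ → ℝ) (ustar : ℝ)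
    (hmax : ∀ u, f u ≤ f ustar)
    (hmono : MonotoneOn f (Set.Iic ustar))
    (hanti : AntitoneOn f (Set.Ici ustar))
    (fin fout : ℝ → ℝ)
    (hfin : ∀ u, fin u = if u < ustar then f u else f ustar)
    (hfout : ∀ u, fout u = if u ≤ ustar then f ustar else f u)
    (m : ℕ) (α : Fin m → ℝ) (hα0 : ∀ j, 0 ≤ α j) (hα1 : ∀ j, α j ≤ 1)
    (umi : ℝ) (hum : ustar ≤ umi)
    (utld : Fin m → ℝ) (hutld : ∀ j, ustar ≤ utld j)
    (hftld : ∀ j, f (utld j) = α j * f ustar)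
    (up : Fin m → ℝ) (hup : ∀ j, up j ≤ utld j) :
    (∀ j, min (α j * fin umi) (fout (up j)) = α j * f ustar) ∧
    (∀ j l, α l * min (α j * fin umi) (fout (up j))
          = α j * min (α l * fin umi) (fout (up l))) := by
  have hfin' : fin umi = f ustar := by
    rw [hfin]; simp [not_lt.mpr hum]
  have key : ∀ j, min (α j * fin umi) (fout (up j)) = α j * f ustar := by
    intro j
    rw [hfin']
    have hle : α j * f ustar ≤ fout (up j) := by
      rw [hfout]
      by_cases h : up j ≤ ustar
      · simp only [h, if_true]
        calc α j * f ustar = f (utld j) := (hftld j).symm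
          _ ≤ f ustar := hmax _
      · simp only [h, if_false]
        have h1 : ustar ≤ up j := le_of_not_ge h
        calc α j * f ustar = f (utld j) := (hftld j).symm
          _ ≤ f (up j) := hanti (Set.mem_Ici.mpr h1)
              (Set.mem_Ici.mpr (h1.trans (hup j))) (hup j)
    exact min_eq_left hle
  refine ⟨key, fun j l => ?_⟩
  rw [key j, key l]; ring
end

section
/- Zero distribution error for α-inside Godunov, uncongested incoming case: fix i with u_i⁻ < u*, and for each j let ũ_j > u* satisfy f(ũ_j) = α_{j,i} f(u_i⁻). If u_j⁺ ≤ ũ_j for all j, then H_{i,j} = min{α_{j,i} f_in(u_i⁻), f_out(u_j⁺)} = α_{j,i} f(u_i⁻) for all j; consequently α_{l,i} H_{i,j} = α_{j,i} H_{i,l} for all j, l. -/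
theorem zero_error_inside_uncongested
    (f : ℝ → ℝ) (ustar : ℝ)
    (hmax : ∀ u, f u ≤ f ustar)
    (hmono : MonotoneOn f (Set.Iic ustar))
    (hanti : AntitoneOn f (Set.Ici ustar))
    (fin fout : ℝ → ℝ)
    (hfin : ∀ u, fin u = if u < ustar then f u else f ustar)
    (hfout : ∀ u, fout u = if u ≤ ustar then f ustar else f u)
    (m : ℕ) (α : Fin m → ℝ) (hα0 : ∀ j, 0 ≤ α j) (hα1 : ∀ j, α j ≤ 1)
    (umi : ℝ) (hum : umi < ustar)
    (utld : Fin m → ℝ) (hutld : ∀ j, ustar < utld j)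
    (hftld : ∀ j, f (utld j) = α j * f umi)
    (up : Fin m → ℝ) (hup : ∀ j, up j ≤ utld j) :
    (∀ j, min (α j * fin umi) (fout (up j)) = α j * f umi) ∧
    (∀ j l, α l * min (α j * fin umi) (fout (up j))
          = α j * min (α l * fin umi) (fout (up l))) := by
  have hfin' : fin umi = f umi := by rw [hfin]; simp [hum]
  have key : ∀ j, min (α j * fin umi) (fout (up j)) = α j * f umi := by
    intro j
    rw [hfin', min_eq_left]
    rw [hfout, ← hftld j]
    by_cases h : up j ≤ ustar
    · simp [h, hmax (utld j)]
    · simp only [h, if_false]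
      exact hanti (Set.mem_Ici.2 (le_of_not_ge h))
        (Set.mem_Ici.2 (le_of_lt (hutld j))) (hup j)
  exact ⟨key, fun j l => by rw [key j, key l]; ring⟩
end
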